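/- For n points in general position in ℝ^k (n > k ≥ 2) and a fixed bounded set B of displaced points, the set of shear parameters γ for which the sheared data set fails to be in general position is finite: if X'_γ = S ∪ A ∪ g_γ(B) where S ∪ A ∪ B is in general position, then X'_γ is in general position for all but finitely many γ ∈ ℝ. -/

import Mathlib

attribute [local instance] Classical.propDecidable

/-- A finite set in ℝ^k is in general position if no affine hyperplane
contains more than k of its points. -/
def InGeneralPosition {k : ℕ} (X : Finset (EuclideanSpace ℝ (Fin k))) : Prop :=
  ∀ (u : EuclideanSpace ℝ (Fin k)) (c : ℝ), u ≠ 0 →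
    (X.filter fun x => (inner ℝ u x : ℝ) = c).card ≤ k

/-- The shear transform g_γ relative to an orthonormal basis e_1,...,e_k:
g_γ(e_1) = e_1 + γ e_2 and g_γ(e_j) = e_j for j ≥ 2. -/
noncomputable def shear {k : ℕ} (hk : 2 ≤ k)
    (b : OrthonormalBasis (Fin k) ℝ (EuclideanSpace ℝ (Fin k))) (γ : ℝ) :
    EuclideanSpace ℝ (Fin k) →ₗ[ℝ] EuclideanSpace ℝ (Fin k) :=
  b.toBasis.constr ℝ fun j =>
    if j = (⟨0, by omega⟩ : Fin k) then b ⟨0, by omega⟩ + γ • b ⟨1, by omega⟩ else b j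

/-!
For `k + 1` points `y i` of `ℝ^k`, lying on a common affine hyperplane is the vanishing of the
determinant of the matrix with rows `(1, y i)`. If every point moves along a line,
`y i + γ • q i`, this determinant is a polynomial in `γ` whose value at `γ = 0` is nonzero when
the starting points are in general position, so each `(k + 1)`-tuple becomes degenerate for only
finitely many `γ`. The sheared configuration is such a motion: `g_γ z = z + γ ⟪e₁, z⟫ e₂` on `B`,
and the points of `S ∪ A` stay put.
-/

open Polynomial Matrix

theorem Matrix.finite_setOf_det_add_smul_eq_zero {ι K : Type*} [Fintype ι] [DecidableEq ι]
    [Field K] {P : Matrix ι ι K} (hP : P.det ≠ 0) (Q : Matrix ι ι K) :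
    {γ : K | (P + γ • Q).det = 0}.Finite := by
  set p : K[X] := (P.map C + (X : K[X]) • Q.map C).det
  have eval_p (γ : K) : p.eval γ = (P + γ • Q).det := by
    rw [← coe_evalRingHom, RingHom.map_det]
    congr 1
    ext i j
    simp only [RingHom.mapMatrix_apply, map_apply, add_apply, smul_apply, smul_eq_mul,
      coe_evalRingHom, eval_add, eval_mul, eval_X, eval_C]
  have hp : p ≠ 0 := by
    intro h
    have := eval_p 0
    rw [h, eval_zero, zero_smul, add_zero] at this
    exact hP this.symm
  simpa only [IsRoot, eval_p] using finite_setOfPred_isRoot hp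

theorem Function.Injective.exists_injective_lift {α β ι : Type*} [DecidableEq β] {f : α → β}
    {s : Finset α} {y : ι → β} (hy : Function.Injective y) (hys : ∀ i, y i ∈ s.image f) :
    ∃ g : ι → α, Function.Injective g ∧ (∀ i, g i ∈ s) ∧ f ∘ g = y := by
  choose g hgs hgy using fun i => Finset.mem_image.mp (hys i)
  have hfg : f ∘ g = y := funext hgy
  exact ⟨g, .of_comp (f := f) (hfg ▸ hy), hgs, hfg⟩

theorem Finset.union_image_eq_image_piecewise {α : Type*} [DecidableEq α] {C B : Finset α}
    [∀ x, Decidable (x ∈ B)] (h : Disjoint C B) (f : α → α) :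
    C ∪ B.image f = (C ∪ B).image (B.piecewise f id) := by
  rw [Finset.image_union, Finset.image_congr fun x hx => B.piecewise_eq_of_notMem f id
      (Finset.disjoint_left.mp h hx), Finset.image_id,
    Finset.image_congr fun x hx => B.piecewise_eq_of_mem f id hx]

def OnCommonHyperplane {ι E : Type*} [NormedAddCommGroup E] [InnerProductSpace ℝ E]
    (y : ι → E) : Prop :=
  ∃ u : E, u ≠ 0 ∧ ∃ c : ℝ, ∀ i, (inner ℝ u (y i) : ℝ) = c

section Euclidean

variable {k : ℕ}

local notation "E" => EuclideanSpace ℝ (Fin k)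

theorem inGeneralPosition_iff_forall_not_onCommonHyperplane {X : Finset E} :
    InGeneralPosition X ↔ ∀ y : Fin (k + 1) → E, Function.Injective y → (∀ i, y i ∈ X) →
      ¬ OnCommonHyperplane y := by
  constructor
  · rintro hX y hy hyX ⟨u, hu, c, hc⟩
    have hsub : Finset.univ.image y ⊆ X.filter fun x => (inner ℝ u x : ℝ) = c := by
      simpa [Finset.image_subset_iff] using fun i => ⟨hyX i, hc i⟩
    have := (Finset.card_le_card hsub).trans (hX u c hu)
    rw [Finset.card_image_of_injective _ hy] at this
    simp at this
  · intro h u c hu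
    by_contra! hk
    obtain ⟨e⟩ : Nonempty (Fin (k + 1) ↪ X.filter fun x => (inner ℝ u x : ℝ) = c) :=
      Function.Embedding.nonempty_of_card_le (by simpa using hk)
    refine h (fun i => e i) (Subtype.val_injective.comp e.injective)
      (fun i => (Finset.mem_filter.mp (e i).2).1) ⟨u, hu, c, fun i => ?_⟩
    exact (Finset.mem_filter.mp (e i).2).2

def affineMatrix (y : Fin (k + 1) → E) : Matrix (Fin (k + 1)) (Fin (k + 1)) ℝ :=
  Matrix.of fun i => Fin.cons 1 (y i)

theorem affineMatrix_mulVec_cons (y : Fin (k + 1) → E) (a : ℝ) (w : Fin k → ℝ)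
    (i : Fin (k + 1)) :
    (affineMatrix y *ᵥ Fin.cons a w) i = a + inner ℝ (WithLp.toLp 2 w) (y i) := by
  simp [affineMatrix, Matrix.mulVec, dotProduct, Fin.sum_univ_succ, PiLp.inner_apply, mul_comm]

theorem onCommonHyperplane_iff_det_affineMatrix_eq_zero (y : Fin (k + 1) → E) :
    OnCommonHyperplane y ↔ (affineMatrix y).det = 0 := by
  rw [← Matrix.exists_mulVec_eq_zero_iff]
  constructor
  · rintro ⟨u, hu, c, hc⟩
    refine ⟨Fin.cons (-c) u.ofLp, fun hv => hu ?_, funext fun i => ?_⟩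
    · exact WithLp.ofLp_injective 2 (congrArg Fin.tail hv)
    · simp [affineMatrix_mulVec_cons, hc]
  · rintro ⟨v, hv, hMv⟩
    rw [← Fin.cons_self_tail v] at hv hMv
    refine ⟨WithLp.toLp 2 (Fin.tail v), fun hu => hv ?_, -v 0, fun i => ?_⟩
    · have h0 := congrFun hMv 0
      rw [affineMatrix_mulVec_cons, hu, inner_zero_left, add_zero, Pi.zero_apply] at h0
      rw [h0, show Fin.tail v = 0 from congrArg WithLp.ofLp hu]
      exact Matrix.cons_zero_zero
    · have hi := congrFun hMv i
      rw [affineMatrix_mulVec_cons] at hi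
      simp only [Pi.zero_apply] at hi
      linarith

theorem affineMatrix_add_smul (p q : Fin (k + 1) → E) (γ : ℝ) :
    affineMatrix (p + γ • q) = affineMatrix p + γ • Matrix.of fun i => Fin.cons 0 (q i) := by
  ext i j
  refine Fin.cases ?_ (fun j => ?_) j <;> simp [affineMatrix]

theorem finite_setOf_onCommonHyperplane_add_smul {p : Fin (k + 1) → E}
    (hp : ¬ OnCommonHyperplane p) (q : Fin (k + 1) → E) :
    {γ : ℝ | OnCommonHyperplane (p + γ • q)}.Finite := by
  simp only [onCommonHyperplane_iff_det_affineMatrix_eq_zero, affineMatrix_add_smul] at hp ⊢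
  exact Matrix.finite_setOf_det_add_smul_eq_zero hp _

theorem finite_setOf_not_inGeneralPosition_image_add_smul {X : Finset E}
    (hX : InGeneralPosition X) (d : E → E) :
    {γ : ℝ | ¬ InGeneralPosition (X.image fun z => z + γ • d z)}.Finite := by
  have tuples_finite : {g : Fin (k + 1) → E | Function.Injective g ∧ ∀ i, g i ∈ X}.Finite :=
    (Set.Finite.pi fun _ => X.finite_toSet).subset fun g hg => by simpa using hg.2
  rw [inGeneralPosition_iff_forall_not_onCommonHyperplane] at hX
  refine (tuples_finite.biUnion fun g hg =>
    finite_setOf_onCommonHyperplane_add_smul (hX g hg.1 hg.2) (d ∘ g)).subset fun γ hγ => ?_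
  simp only [Set.mem_ofPred_eq, inGeneralPosition_iff_forall_not_onCommonHyperplane, not_forall,
    not_not] at hγ
  obtain ⟨y, hy, hyX, hyH⟩ := hγ
  obtain ⟨g, hg, hgX, rfl⟩ := hy.exists_injective_lift hyX
  exact Set.mem_biUnion ⟨hg, hgX⟩ hyH

end Euclidean

theorem shear_apply {k : ℕ} (hk : 2 ≤ k)
    (b : OrthonormalBasis (Fin k) ℝ (EuclideanSpace ℝ (Fin k))) (γ : ℝ)
    (x : EuclideanSpace ℝ (Fin k)) :
    shear hk b γ x = x + (γ * inner ℝ (b ⟨0, by omega⟩) x) • b ⟨1, by omega⟩ := by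
  suffices shear hk b γ = LinearMap.id +
      γ • (LinearMap.toSpanSingleton ℝ _ (b ⟨1, by omega⟩)).comp (innerₛₗ ℝ (b ⟨0, by omega⟩)) by
    simp [this, smul_smul]
  refine b.toBasis.ext fun i => ?_
  rw [shear, b.toBasis.constr_basis]
  by_cases h : i = ⟨0, by omega⟩
  · subst h
    simp
  · simp [h, b.inner_eq_ite, Ne.symm h]

theorem sheared_general_position_cofinite {k : ℕ} (hk : 2 ≤ k)
    (b : OrthonormalBasis (Fin k) ℝ (EuclideanSpace ℝ (Fin k)))
    (S A B : Finset (EuclideanSpace ℝ (Fin k)))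
    (hSB : Disjoint S B) (hAB : Disjoint A B)
    (hGP : InGeneralPosition (S ∪ A ∪ B)) :
    {γ : ℝ | ¬ InGeneralPosition (S ∪ A ∪ B.image (shear hk b γ))}.Finite := by
  set d := B.piecewise (fun z => inner ℝ (b ⟨0, by omega⟩) z • b ⟨1, by omega⟩) 0
  have shear_eq_add_smul (γ : ℝ) : B.piecewise (shear hk b γ) id = fun z => z + γ • d z := by
    funext z
    by_cases hz : z ∈ B <;> simp [d, hz, shear_apply, smul_smul]
  simp_rw [Finset.union_image_eq_image_piecewise (Finset.disjoint_union_left.mpr ⟨hSB, hAB⟩),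
    shear_eq_add_smul]
  exact finite_setOf_not_inGeneralPosition_image_add_smul hGP d
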